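/- arXiv:0909.3568 — 5 statements merged into one kernel-verified Lean document; each statement's English description precedes it below -/
import Mathlib

section
/- Let z₀, z be points of the open unit ball Bⁿ of ℂⁿ and let r ∈ (0,1). If z belongs to the pseudohyperbolic ball B(z₀,r), i.e. (1-‖z₀‖²)(1-‖z‖²) > (1-r²)|1-⟨z,z₀⟩|², then 1-‖z₀‖² > ((1-r²)/4)·(‖z-z₀‖² + |⟨z-z₀,z₀⟩|). -/
open scoped ComplexInnerProductSpace

/-! Both terms on the right are controlled by `t = |1 - ⟨z,z₀⟩|`: expanding the norm gives
`‖z - z₀‖² ≤ 2t - (1 - ‖z‖²) - (1 - ‖z₀‖²)`, and `⟨z - z₀, z₀⟩ = (1 - ‖z₀‖²) - (1 - ⟨z,z₀⟩)`,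
so the sum is at most `3t - (1 - ‖z‖²)`. Membership in the ball says
`1 - ‖z₀‖² > (1 - r²) t² / (1 - ‖z‖²)`, and `(3t - e) e ≤ 4t²` because the quadratic
`4t² - 3te + e²` has negative discriminant. -/

section UnitBall

variable {𝕜 V : Type*} [RCLike 𝕜] [NormedAddCommGroup V] [InnerProductSpace 𝕜 V]

local notation "⟪" x ", " y "⟫" => inner 𝕜 x y

lemma norm_sub_sq_le_two_mul_norm_one_sub_inner (z₀ z : V) :
    ‖z - z₀‖ ^ 2 ≤ 2 * ‖1 - ⟪z₀, z⟫‖ - (1 - ‖z‖ ^ 2) - (1 - ‖z₀‖ ^ 2) := by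
  have hre : RCLike.re ⟪z, z₀⟫ = RCLike.re ⟪z₀, z⟫ := by
    rw [← inner_conj_symm, RCLike.conj_re]
  have hle : 1 - RCLike.re ⟪z₀, z⟫ ≤ ‖1 - ⟪z₀, z⟫‖ := by
    simpa using RCLike.re_le_norm (1 - ⟪z₀, z⟫)
  rw [@norm_sub_sq 𝕜, hre]
  linarith

lemma inner_sub_right_self_eq (z₀ z : V) :
    ⟪z₀, z - z₀⟫ = ((1 - ‖z₀‖ ^ 2 : ℝ) : 𝕜) - (1 - ⟪z₀, z⟫) := by
  rw [inner_sub_right, inner_self_eq_norm_sq_to_K]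
  push_cast
  ring

lemma norm_sub_sq_add_norm_inner_sub_le {z₀ : V} (z : V) (hz₀ : ‖z₀‖ ≤ 1) :
    ‖z - z₀‖ ^ 2 + ‖⟪z₀, z - z₀⟫‖ ≤ 3 * ‖1 - ⟪z₀, z⟫‖ - (1 - ‖z‖ ^ 2) := by
  have hinner : ‖⟪z₀, z - z₀⟫‖ ≤ (1 - ‖z₀‖ ^ 2) + ‖1 - ⟪z₀, z⟫‖ := by
    rw [inner_sub_right_self_eq]
    refine (norm_sub_le _ _).trans_eq ?_
    rw [RCLike.norm_ofReal, abs_of_nonneg (by nlinarith [norm_nonneg z₀])]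
  linarith [norm_sub_sq_le_two_mul_norm_one_sub_inner (𝕜 := 𝕜) z₀ z]

end UnitBall

theorem stmt_0_general (n : ℕ) (z₀ z : EuclideanSpace ℂ (Fin n))
    (hz₀ : ‖z₀‖ < 1) (hz : ‖z‖ < 1) (r : ℝ) (hr0 : 0 < r) (hr1 : r < 1)
    (hmem : (1 - ‖z₀‖ ^ 2) * (1 - ‖z‖ ^ 2) > (1 - r ^ 2) * ‖1 - ⟪z₀, z⟫‖ ^ 2) :
    1 - ‖z₀‖ ^ 2 > (1 - r ^ 2) / 4 * (‖z - z₀‖ ^ 2 + ‖⟪z₀, z - z₀⟫‖) := by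
  set t := ‖1 - ⟪z₀, z⟫‖
  set e := 1 - ‖z‖ ^ 2
  have he : 0 < e := by nlinarith [norm_nonneg z]
  have hs : 0 ≤ 1 - r ^ 2 := by nlinarith
  have hquad : (3 * t - e) * e ≤ 4 * t ^ 2 := by nlinarith [sq_nonneg (2 * t - 3 / 4 * e)]
  calc (1 - r ^ 2) / 4 * (‖z - z₀‖ ^ 2 + ‖⟪z₀, z - z₀⟫‖)
      ≤ (1 - r ^ 2) / 4 * (3 * t - e) := by
        gcongr
        exact norm_sub_sq_add_norm_inner_sub_le z hz₀.le
    _ ≤ (1 - r ^ 2) * t ^ 2 / e := by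
        rw [le_div_iff₀ he]
        nlinarith
    _ < 1 - ‖z₀‖ ^ 2 := by
        rw [div_lt_iff₀ he]
        linarith

/-- **Lemma 1.3 (Abate–Saracco).** If `z` lies in the pseudohyperbolic ball of center `z₀`
and radius `r` in the unit ball of `ℂⁿ`, then
`1 - ‖z₀‖² > ((1-r²)/4)·(‖z-z₀‖² + |⟨z-z₀,z₀⟩|)`.
Here the Hermitian product `⟨z,w⟩` (linear in the first slot) is `⟪w, z⟫` in Mathlib. -/
theorem stmt_0 (n : ℕ) (hn : 1 ≤ n) (z₀ z : EuclideanSpace ℂ (Fin n))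
    (hz₀ : ‖z₀‖ < 1) (hz : ‖z‖ < 1) (r : ℝ) (hr0 : 0 < r) (hr1 : r < 1)
    (hmem : (1 - ‖z₀‖ ^ 2) * (1 - ‖z‖ ^ 2) > (1 - r ^ 2) * ‖1 - ⟪z₀, z⟫‖ ^ 2) :
    1 - ‖z₀‖ ^ 2 > (1 - r ^ 2) / 4 * (‖z - z₀‖ ^ 2 + ‖⟪z₀, z - z₀⟫‖) :=
  stmt_0_general n z₀ z hz₀ hz r hr0 hr1 hmem
end

section
/- For all z₀, z in the open unit ball Bⁿ of ℂⁿ one has the strict inequality |1-⟨z,z₀⟩|²/(1-‖z‖²) > (1/2)·|⟨z-z₀,z₀⟩|. -/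
/-!
Write `a = ⟪z₀, z⟫` and `t = ‖z₀‖`, so that `⟪z₀, z - z₀⟫ = a - t²`. The identity
`|a - t²|² - t²|1 - a|² = (|a|² - t²)(1 - t²)` and `|a| ≤ t ≤ 1` give `|a - t²| ≤ t |1 - a|`.
Since `|1 - a| ≥ 1 - t‖z‖` and `t (1 - ‖z‖²) < 2 (1 - t‖z‖)`, we get
`|a - t²| (1 - ‖z‖²) ≤ t (1 - ‖z‖²) |1 - a| < 2 |1 - a|²`.
-/

open scoped ComplexInnerProductSpace

namespace RCLike

variable {𝕜 : Type*} [RCLike 𝕜]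

theorem sq_norm_sub_ofReal_sq_sub_mul_sq_norm_one_sub (a : 𝕜) (t : ℝ) :
    ‖a - (t : 𝕜) ^ 2‖ ^ 2 - t ^ 2 * ‖1 - a‖ ^ 2 = (‖a‖ ^ 2 - t ^ 2) * (1 - t ^ 2) := by
  rw [← ofReal_pow]
  simp only [norm_sq_eq_def, map_sub, ofReal_re, ofReal_im, one_re, one_im]
  ring

theorem norm_sub_ofReal_sq_le {a : 𝕜} {t : ℝ} (ha : ‖a‖ ≤ t) (ht : t ≤ 1) :
    ‖a - (t : 𝕜) ^ 2‖ ≤ t * ‖1 - a‖ := by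
  have ht0 : 0 ≤ t := (norm_nonneg a).trans ha
  refine (pow_le_pow_iff_left₀ (norm_nonneg _) (by positivity) two_ne_zero).1 ?_
  have := sq_norm_sub_ofReal_sq_sub_mul_sq_norm_one_sub a t
  have : (‖a‖ ^ 2 - t ^ 2) * (1 - t ^ 2) ≤ 0 :=
    mul_nonpos_of_nonpos_of_nonneg (by nlinarith [norm_nonneg a]) (by nlinarith)
  nlinarith

end RCLike

section InnerProductSpace

variable {𝕜 E : Type*} [RCLike 𝕜] [NormedAddCommGroup E] [InnerProductSpace 𝕜 E]

local notation "⟪" x ", " y "⟫" => inner 𝕜 x y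

theorem norm_inner_sub_self_le {x y : E} (hx : ‖x‖ ≤ 1) (hy : ‖y‖ ≤ 1) :
    ‖⟪x, y - x⟫‖ ≤ ‖x‖ * ‖1 - ⟪x, y⟫‖ := by
  rw [inner_sub_right, inner_self_eq_norm_sq_to_K]
  exact RCLike.norm_sub_ofReal_sq_le
    ((norm_inner_le_norm x y).trans (mul_le_of_le_one_right (norm_nonneg x) hy)) hx

theorem one_sub_norm_mul_le_norm_one_sub_inner (x y : E) :
    1 - ‖x‖ * ‖y‖ ≤ ‖1 - ⟪x, y⟫‖ := by
  have := norm_sub_norm_le (1 : 𝕜) ⟪x, y⟫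
  have := norm_inner_le_norm (𝕜 := 𝕜) x y
  simp only [norm_one] at *
  linarith

theorem norm_inner_sub_self_mul_lt {x y : E} (hx : ‖x‖ < 1) (hy : ‖y‖ < 1) :
    ‖⟪x, y - x⟫‖ * (1 - ‖y‖ ^ 2) < 2 * ‖1 - ⟪x, y⟫‖ ^ 2 := by
  set t := ‖x‖
  set s := ‖y‖
  set u := ‖1 - ⟪x, y⟫‖
  have ht0 : 0 ≤ t := norm_nonneg x
  have hs0 : 0 ≤ s := norm_nonneg y
  have hu : 1 - t * s ≤ u := one_sub_norm_mul_le_norm_one_sub_inner x y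
  have hm : ‖⟪x, y - x⟫‖ ≤ t * u := norm_inner_sub_self_le hx.le hy.le
  have hu0 : 0 < u := by nlinarith
  have hlt : t * (1 - s ^ 2) < 2 * u := by nlinarith [mul_nonneg ht0 (sq_nonneg (1 - s))]
  calc ‖⟪x, y - x⟫‖ * (1 - s ^ 2) ≤ t * u * (1 - s ^ 2) := by gcongr; nlinarith
    _ = u * (t * (1 - s ^ 2)) := by ring
    _ < u * (2 * u) := by gcongr
    _ = 2 * u ^ 2 := by ring

end InnerProductSpace

theorem stmt_2_general (n : ℕ) (z₀ z : EuclideanSpace ℂ (Fin n))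
    (hz₀ : ‖z₀‖ < 1) (hz : ‖z‖ < 1) :
    ‖1 - ⟪z₀, z⟫‖ ^ 2 / (1 - ‖z‖ ^ 2) > 1 / 2 * ‖⟪z₀, z - z₀⟫‖ := by
  have hden : 0 < 1 - ‖z‖ ^ 2 := by nlinarith [norm_nonneg z]
  rw [gt_iff_lt, lt_div_iff₀ hden]
  linarith [norm_inner_sub_self_mul_lt hz₀ hz (𝕜 := ℂ)]

/-- For all `z₀, z` in the open unit ball of `ℂⁿ` one has
`|1-⟨z,z₀⟩|²/(1-‖z‖²) > (1/2)·|⟨z-z₀,z₀⟩|`.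
Here the Hermitian product `⟨z,w⟩` (linear in the first slot) is `⟪w, z⟫` in Mathlib. -/
theorem stmt_2 (n : ℕ) (hn : 1 ≤ n) (z₀ z : EuclideanSpace ℂ (Fin n))
    (hz₀ : ‖z₀‖ < 1) (hz : ‖z‖ < 1) :
    ‖1 - ⟪z₀, z⟫‖ ^ 2 / (1 - ‖z‖ ^ 2) > 1 / 2 * ‖⟪z₀, z - z₀⟫‖ :=
  stmt_2_general n z₀ z hz₀ hz
end

section
/- Let (X,d) be a metric space and let {x_j}_{j∈ℕ} be a sequence in X. Suppose there exist N ≥ 1 and r > 0 such that for every x ∈ X the number of indices j with d(x,x_j) < r is at most N. Then the index set ℕ can be partitioned into at most N sets S₀,…,S_{N-1} such that for each i and all distinct j, k ∈ S_i one has d(x_j,x_k) ≥ r; in other words, the sequence is the union of at most N uniformly discrete subsequences with separation constant at least r. -/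
/-!
Join two indices when their points are at distance `< r`. The ball of radius `r` about `x j`
contains `x j` itself, so `j` has fewer than `N` neighbours. Coloring `0, 1, 2, …` greedily, each
`j` receives the least color not used by its earlier neighbours, which is `< N`; the color
classes are the required uniformly discrete subsequences.
-/

open Finset

namespace Finset

theorem sInf_compl_notMem (s : Finset ℕ) : sInf (↑s : Set ℕ)ᶜ ∉ s :=
  Nat.sInf_mem s.finite_toSet.infinite_compl.nonempty

theorem sInf_compl_le_card (s : Finset ℕ) : sInf (↑s : Set ℕ)ᶜ ≤ #s := by
  have hrange : range (sInf (↑s : Set ℕ)ᶜ) ⊆ s := fun i hi => by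
    by_contra his
    exact (mem_range.mp hi).not_ge (Nat.sInf_le his)
  simpa using card_le_card hrange

end Finset

namespace SimpleGraph

variable (G : SimpleGraph ℕ) [DecidableRel G.Adj]

/-- `sInf (↑s)ᶜ` is the least color outside `s`, here the colors of the neighbours `k < j`. -/
noncomputable def greedyColor : ℕ → ℕ
  | j => sInf (↑(({k ∈ range j | G.Adj j k}).attach.image
      fun k => greedyColor k.1) : Set ℕ)ᶜ
decreasing_by exact mem_range.mp (mem_filter.mp k.2).1

theorem greedyColor_eq (j : ℕ) :
    G.greedyColor j = sInf (↑(({k ∈ range j | G.Adj j k}).attach.image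
      fun k => G.greedyColor k.1) : Set ℕ)ᶜ := by
  rw [greedyColor]

theorem greedyColor_le_card (j : ℕ) : G.greedyColor j ≤ #{k ∈ range j | G.Adj j k} := by
  rw [greedyColor_eq]
  exact (sInf_compl_le_card _).trans (card_image_le.trans_eq card_attach)

theorem greedyColor_ne_of_adj_of_lt {j k : ℕ} (hadj : G.Adj j k) (hkj : k < j) :
    G.greedyColor k ≠ G.greedyColor j := by
  have hk : k ∈ {k ∈ range j | G.Adj j k} := mem_filter.mpr ⟨mem_range.mpr hkj, hadj⟩
  have hused := mem_image_of_mem (fun k => G.greedyColor k.1) (mem_attach _ ⟨k, hk⟩)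
  rw [greedyColor_eq G j]
  exact ne_of_mem_of_not_mem hused (sInf_compl_notMem _)

noncomputable def greedyColoring : G.Coloring ℕ :=
  Coloring.mk G.greedyColor fun {j k} hadj => by
    rcases (G.ne_of_adj hadj).lt_or_gt with hjk | hkj
    · exact G.greedyColor_ne_of_adj_of_lt hadj.symm hjk
    · exact (G.greedyColor_ne_of_adj_of_lt hadj hkj).symm

theorem colorable_of_card_filter_adj_lt {N : ℕ}
    (h : ∀ j, #{k ∈ range j | G.Adj j k} < N) : G.Colorable N :=
  (colorable_iff_exists_bdd_nat_coloring N).mpr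
    ⟨G.greedyColoring, fun j => (G.greedyColor_le_card j).trans_lt (h j)⟩

end SimpleGraph

theorem card_filter_dist_lt_lt {X : Type*} [MetricSpace X] (x : ℕ → X) {N : ℕ}
    {r : ℝ} (hr : 0 < r)
    (hcount : ∀ y : X, {j : ℕ | dist y (x j) < r}.Finite ∧
      {j : ℕ | dist y (x j) < r}.ncard ≤ N) (j : ℕ) :
    #{k ∈ range j | dist (x j) (x k) < r} < N := by
  set F := {k ∈ range j | dist (x j) (x k) < r}
  have hj : j ∉ F := by simp [F]
  have hball : (↑(insert j F) : Set ℕ) ⊆ {k | dist (x j) (x k) < r} := by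
    intro k hk
    rcases mem_insert.mp hk with rfl | hkF
    · simpa using hr
    · exact (mem_filter.mp hkF).2
  have hle := (Set.ncard_le_ncard hball (hcount (x j)).1).trans (hcount (x j)).2
  rw [Set.ncard_coe_finset, card_insert_of_notMem hj] at hle
  omega

theorem stmt_3_general {X : Type*} [MetricSpace X] (x : ℕ → X) (N : ℕ)
    (r : ℝ) (hr : 0 < r)
    (hcount : ∀ y : X, {j : ℕ | dist y (x j) < r}.Finite ∧
      {j : ℕ | dist y (x j) < r}.ncard ≤ N) :
    ∃ m : ℕ → Fin N, ∀ j k : ℕ, j ≠ k → m j = m k → r ≤ dist (x j) (x k) := by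
  classical
  let G := SimpleGraph.fromRel fun j k => dist (x j) (x k) < r
  have hearlier : ∀ j, #{k ∈ range j | G.Adj j k} < N := fun j => by
    refine (card_le_card fun k hk => ?_).trans_lt (card_filter_dist_lt_lt x hr hcount j)
    obtain ⟨hkj, hadj⟩ := mem_filter.mp hk
    refine mem_filter.mpr ⟨hkj, ?_⟩
    rcases ((SimpleGraph.fromRel_adj _ _ _).mp hadj).2 with h | h
    · exact h
    · rwa [dist_comm]
  obtain ⟨C⟩ := G.colorable_of_card_filter_adj_lt hearlier
  refine ⟨C, fun j k hjk hC => not_lt.mp fun hlt => C.valid ?_ hC⟩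
  exact (SimpleGraph.fromRel_adj _ _ _).mpr ⟨hjk, Or.inl hlt⟩

/-- **Lemma 3.1 (Abate–Saracco).** If every open metric ball of radius `r` contains at most `N`
points of the sequence `x`, then the index set `ℕ` can be partitioned into at most `N` classes
(given by a coloring `m : ℕ → Fin N`) such that any two distinct points in the same class are
at distance at least `r`; i.e. the sequence is a union of at most `N` uniformly discrete
subsequences with separation constant at least `r`. -/
theorem stmt_3 {X : Type*} [MetricSpace X] (x : ℕ → X) (N : ℕ) (hN : 1 ≤ N)
    (r : ℝ) (hr : 0 < r)
    (hcount : ∀ y : X, {j : ℕ | dist y (x j) < r}.Finite ∧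
      {j : ℕ | dist y (x j) < r}.ncard ≤ N) :
    ∃ m : ℕ → Fin N, ∀ j k : ℕ, j ≠ k → m j = m k → r ≤ dist (x j) (x k) :=
  stmt_3_general x N r hr hcount
end

section
/- Let Γ = {z_j} be a sequence in Bⁿ that is uniformly discrete with respect to the pseudohyperbolic distance. Then Σ_j (1-‖z_j‖)^{n+1} < ∞. -/
/-
Around each `z_j` place the non-isotropic region `tube c z_j`, of size `≍ c (1 - ‖z_j‖²)` in the
complex normal direction and `≍ c (1 - ‖z_j‖²)^{1/2}` in the tangential ones; it contains a box of
volume `≍ (1 - ‖z_j‖²)^{n+1}`. If two such regions meet, then `|1 - ⟨z_j, z_k⟩|` is at most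
`(1 + O(c))` times both `1 - ‖z_j‖²` and `1 - ‖z_k‖²`, which forces `ρ(z_j, z_k)² = O(c)`. Hence for
`c` small compared to `δ²` the regions are pairwise disjoint; as they all lie in a fixed ball, the
sum of their volumes, and with it `Σ_j (1 - ‖z_j‖)^{n+1}`, is finite.
-/

open scoped ComplexInnerProductSpace

noncomputable section

/-- The pseudohyperbolic distance on the unit ball of `ℂⁿ`:
`ρ(z,w) = (1 - (1-‖z‖²)(1-‖w‖²)/|1-⟨z,w⟩|²)^{1/2}`. -/
def pdist {n : ℕ} (z w : EuclideanSpace ℂ (Fin n)) : ℝ :=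
  Real.sqrt (1 - (1 - ‖z‖ ^ 2) * (1 - ‖w‖ ^ 2) / ‖1 - ⟪z, w⟫‖ ^ 2)

open Function MeasureTheory

theorem one_sub_norm_sq_pos {E : Type*} [SeminormedAddCommGroup E] {z : E} (hz : ‖z‖ < 1) :
    0 < 1 - ‖z‖ ^ 2 :=
  sub_pos.2 (pow_lt_one₀ (norm_nonneg z) hz two_ne_zero)

section Tube

variable {E : Type*} [NormedAddCommGroup E] [InnerProductSpace ℂ E]

def tube (c : ℝ) (z : E) : Set E :=
  {w | ‖w - z‖ ^ 2 ≤ 4 * c ^ 2 * (1 - ‖z‖ ^ 2) ∧ ‖⟪z, w - z⟫‖ ≤ c * (1 - ‖z‖ ^ 2)}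

variable {c : ℝ} {z z₁ z₂ w : E}

theorem isClosed_tube (c : ℝ) (z : E) : IsClosed (tube c z) := by
  simp only [tube, Set.ofPred_and]
  exact (isClosed_le (by fun_prop) continuous_const).inter
    (isClosed_le (by fun_prop) continuous_const)

theorem nonneg_of_mem_tube (hz : ‖z‖ < 1) (hw : w ∈ tube c z) : 0 ≤ c :=
  nonneg_of_mul_nonneg_left ((norm_nonneg _).trans hw.2) (one_sub_norm_sq_pos hz)

theorem tube_subset_ball (hz : ‖z‖ < 1) (hc : c ≤ 1) : tube c z ⊆ Metric.ball 0 3 := by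
  intro w hw
  have hs := one_sub_norm_sq_pos hz
  have hc0 := nonneg_of_mem_tube hz hw
  have hwz : ‖w - z‖ ≤ 2 := by nlinarith [hw.1, norm_nonneg (w - z), norm_nonneg z]
  rw [mem_ball_zero_iff]
  linarith [norm_le_norm_add_norm_sub' w z]

theorem abs_norm_sq_sub_norm_sq_le_of_mem_tube (hz : ‖z‖ < 1) (hc : c ≤ 1) (hw : w ∈ tube c z) :
    |‖w‖ ^ 2 - ‖z‖ ^ 2| ≤ 6 * c * (1 - ‖z‖ ^ 2) := by
  have hs := one_sub_norm_sq_pos hz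
  have hc0 := nonneg_of_mem_tube hz hw
  obtain ⟨hnorm, hinner⟩ := hw
  have hexpand : ‖w‖ ^ 2 = ‖z‖ ^ 2 + 2 * (⟪z, w - z⟫).re + ‖w - z‖ ^ 2 := by
    have h := norm_add_sq (𝕜 := ℂ) z (w - z)
    rwa [add_sub_cancel] at h
  have hre := abs_le.mp ((Complex.abs_re_le_norm _).trans hinner)
  rw [abs_le]
  constructor <;> nlinarith [sq_nonneg ‖w - z‖, mul_le_mul_of_nonneg_right hc hs.le,
    mul_nonneg hc0 hs.le]

theorem one_sub_norm_sq_le_of_mem_tube_inter (hz₁ : ‖z₁‖ < 1) (hz₂ : ‖z₂‖ < 1) (hc : c ≤ 1 / 12)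
    (hw₁ : w ∈ tube c z₁) (hw₂ : w ∈ tube c z₂) :
    1 - ‖z₁‖ ^ 2 ≤ (1 + 24 * c) * (1 - ‖z₂‖ ^ 2) := by
  have h₁ := abs_le.mp (abs_norm_sq_sub_norm_sq_le_of_mem_tube hz₁ (by linarith) hw₁)
  have h₂ := abs_le.mp (abs_norm_sq_sub_norm_sq_le_of_mem_tube hz₂ (by linarith) hw₂)
  have hs := one_sub_norm_sq_pos hz₁
  have ht := one_sub_norm_sq_pos hz₂
  nlinarith

theorem norm_one_sub_inner_le_add_of_mem_tube_inter (hz₁ : ‖z₁‖ < 1) (hz₂ : ‖z₂‖ < 1)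
    (hc : c ≤ 1) (hw₁ : w ∈ tube c z₁) (hw₂ : w ∈ tube c z₂) :
    ‖1 - ⟪z₁, z₂⟫‖ ≤ (1 + 3 * c) * (1 - ‖z₁‖ ^ 2) + 7 * c * (1 - ‖z₂‖ ^ 2) := by
  have hc0 := nonneg_of_mem_tube hz₁ hw₁
  obtain ⟨hp, hinner₁⟩ := hw₁
  obtain ⟨hp', hinner₂⟩ := hw₂
  set s := 1 - ‖z₁‖ ^ 2
  set t := 1 - ‖z₂‖ ^ 2
  have hs : 0 < s := one_sub_norm_sq_pos hz₁
  have ht : 0 < t := one_sub_norm_sq_pos hz₂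
  have hdecomp : 1 - ⟪z₁, z₂⟫ =
      ((s : ℂ) - ⟪z₁, w - z₁⟫) + ⟪z₂, w - z₂⟫ + ⟪z₁ - z₂, w - z₂⟫ := by
    have hs' : (s : ℂ) = 1 - ⟪z₁, z₁⟫ := by simp [s, inner_self_eq_norm_sq_to_K]
    rw [hs']
    simp only [inner_sub_left, inner_sub_right]
    ring
  have hcross : ‖⟪z₁ - z₂, w - z₂⟫‖ ≤ (‖w - z₁‖ + ‖w - z₂‖) * ‖w - z₂‖ := by
    refine (norm_inner_le_norm _ _).trans (mul_le_mul_of_nonneg_right ?_ (norm_nonneg _))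
    simpa [add_comm] using norm_sub_le (w - z₂) (w - z₁)
  calc ‖1 - ⟪z₁, z₂⟫‖
      ≤ ‖(s : ℂ)‖ + ‖⟪z₁, w - z₁⟫‖ + ‖⟪z₂, w - z₂⟫‖ + ‖⟪z₁ - z₂, w - z₂⟫‖ := by
        rw [hdecomp]
        exact norm_add₃_le.trans (by gcongr; exact norm_sub_le _ _)
    _ ≤ s + c * s + c * t + (‖w - z₁‖ + ‖w - z₂‖) * ‖w - z₂‖ := by
        rw [Complex.norm_real, Real.norm_of_nonneg hs.le]
        gcongr
    _ ≤ (1 + 3 * c) * s + 7 * c * t := by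
        have hcc : c ^ 2 ≤ c := by nlinarith
        nlinarith [sq_nonneg (‖w - z₁‖ - ‖w - z₂‖), mul_le_mul_of_nonneg_right hcc hs.le,
          mul_le_mul_of_nonneg_right hcc ht.le]

theorem norm_one_sub_inner_le_of_mem_tube_inter (hz₁ : ‖z₁‖ < 1) (hz₂ : ‖z₂‖ < 1)
    (hc : c ≤ 1 / 12) (hw₁ : w ∈ tube c z₁) (hw₂ : w ∈ tube c z₂) :
    ‖1 - ⟪z₁, z₂⟫‖ ≤ (1 + 24 * c) * (1 - ‖z₁‖ ^ 2) := by
  have hA := norm_one_sub_inner_le_add_of_mem_tube_inter hz₁ hz₂ (by linarith) hw₁ hw₂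
  have hts := one_sub_norm_sq_le_of_mem_tube_inter hz₂ hz₁ hc hw₂ hw₁
  have hs := one_sub_norm_sq_pos hz₁
  have hc0 := nonneg_of_mem_tube hz₁ hw₁
  nlinarith [mul_le_mul_of_nonneg_left hts hc0, mul_nonneg hc0 hs.le]

end Tube

theorem pdist_sq_le_of_mem_tube_inter {n : ℕ} {c : ℝ} {z₁ z₂ w : EuclideanSpace ℂ (Fin n)}
    (hz₁ : ‖z₁‖ < 1) (hz₂ : ‖z₂‖ < 1) (hc : c ≤ 1 / 12)
    (hw₁ : w ∈ tube c z₁) (hw₂ : w ∈ tube c z₂) :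
    pdist z₁ z₂ ^ 2 ≤ 48 * c := by
  have hA₁ := norm_one_sub_inner_le_of_mem_tube_inter hz₁ hz₂ hc hw₁ hw₂
  have hA₂ := norm_one_sub_inner_le_of_mem_tube_inter hz₂ hz₁ hc hw₂ hw₁
  have hsymm : ‖1 - ⟪z₂, z₁⟫‖ = ‖1 - ⟪z₁, z₂⟫‖ := by
    rw [← Complex.norm_conj, map_sub, map_one, inner_conj_symm]
  rw [hsymm] at hA₂
  have hc0 := nonneg_of_mem_tube hz₁ hw₁
  have hs := one_sub_norm_sq_pos hz₁
  have ht := one_sub_norm_sq_pos hz₂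
  set A := ‖1 - ⟪z₁, z₂⟫‖
  have hA0 : 0 < A := by
    have h := norm_sub_norm_le (1 : ℂ) ⟪z₁, z₂⟫
    have hcs := norm_inner_le_norm (𝕜 := ℂ) z₁ z₂
    rw [norm_one] at h
    nlinarith [norm_nonneg z₁, norm_nonneg z₂]
  have hA2 : A ^ 2 ≤ (1 + 24 * c) ^ 2 * ((1 - ‖z₁‖ ^ 2) * (1 - ‖z₂‖ ^ 2)) := by
    nlinarith [mul_le_mul hA₁ hA₂ hA0.le (by positivity)]
  rw [pdist, Real.sq_sqrt', max_le_iff]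
  refine ⟨?_, by positivity⟩
  rw [sub_le_comm, le_div_iff₀ (by positivity)]
  nlinarith [mul_nonneg (mul_nonneg hs.le ht.le) (mul_nonneg hc0 hc0)]

theorem exists_norm_eq_one_and_eq_norm_smul {E : Type*} [NormedAddCommGroup E] [NormedSpace ℂ E]
    [Nontrivial E] (z : E) : ∃ u : E, ‖u‖ = 1 ∧ z = (‖z‖ : ℂ) • u := by
  rcases eq_or_ne z 0 with rfl | hz
  · obtain ⟨u, hu⟩ := exists_norm_eq E zero_le_one
    exact ⟨u, hu, by simp⟩
  · have hz' : (‖z‖ : ℂ) ≠ 0 := by simpa using hz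
    exact ⟨(‖z‖⁻¹ : ℂ) • z, norm_smul_inv_norm hz, (smul_inv_smul₀ hz' z).symm⟩

namespace EuclideanSpace

variable {ι : Type*} [Fintype ι]

theorem real_inner_eq_re_inner (x y : EuclideanSpace ℂ ι) : inner ℝ x y = (⟪x, y⟫).re := by
  simp [PiLp.inner_apply, RCLike.inner_apply]

theorem orthonormal_pair_I_smul {u : EuclideanSpace ℂ ι} (hu : ‖u‖ = 1) :
    Orthonormal ℝ ![u, Complex.I • u] := by
  rw [orthonormal_iff_ite]
  intro i j
  fin_cases i <;> fin_cases j <;>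
    simp [real_inner_eq_re_inner, norm_smul, hu]

theorem exists_orthonormalBasis_inl_eq {m : ℕ} {u : EuclideanSpace ℂ (Fin (m + 1))}
    (hu : ‖u‖ = 1) :
    ∃ b : OrthonormalBasis (Fin 2 ⊕ Fin (2 * m)) ℝ (EuclideanSpace ℂ (Fin (m + 1))),
      b (.inl 0) = u ∧ b (.inl 1) = Complex.I • u := by
  have hcard : Module.finrank ℝ (EuclideanSpace ℂ (Fin (m + 1))) =
      Fintype.card (Fin 2 ⊕ Fin (2 * m)) := by
    rw [← Module.finrank_mul_finrank ℝ ℂ, Complex.finrank_real_complex, finrank_euclideanSpace_fin]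
    simp only [Fintype.card_sum, Fintype.card_fin]
    ring
  have hv : Orthonormal ℝ ((Set.range Sum.inl).domRestrict
      (Sum.elim ![u, Complex.I • u] 0 : Fin 2 ⊕ Fin (2 * m) → _)) := by
    have h := orthonormal_pair_I_smul hu
    rw [orthonormal_iff_ite] at h ⊢
    rintro ⟨_, i, rfl⟩ ⟨_, j, rfl⟩
    simp [h i j, Subtype.ext_iff]
  obtain ⟨b, hb⟩ := hv.exists_orthonormalBasis_extension_of_card_eq hcard
  exact ⟨b, hb _ ⟨0, rfl⟩, hb _ ⟨1, rfl⟩⟩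

end EuclideanSpace

theorem OrthonormalBasis.volume_setOf_abs_repr_sub_le {ι F : Type*} [Fintype ι]
    [NormedAddCommGroup F] [InnerProductSpace ℝ F] [FiniteDimensional ℝ F] [MeasurableSpace F]
    [BorelSpace F] (b : OrthonormalBasis ι ℝ F) (z : F) (r : ι → ℝ) :
    volume {w | ∀ i, |b.repr (w - z) i| ≤ r i} = ∏ i, ENNReal.ofReal (2 * r i) := by
  have hbox : {w | ∀ i, |b.repr (w - z) i| ≤ r i} =
      (fun w => WithLp.ofLp (b.repr (w - z))) ⁻¹' Set.univ.pi fun i => Set.Icc (-r i) (r i) := by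
    ext w
    simp only [Set.mem_ofPred_eq, Set.mem_preimage, Set.mem_univ_pi, Set.mem_Icc, abs_le]
  have hmp : MeasurePreserving (fun w => WithLp.ofLp (b.repr (w - z))) volume volume :=
    (PiLp.volume_preserving_ofLp ι).comp
      (b.measurePreserving_repr.comp (measurePreserving_sub_right volume z))
  rw [hbox, hmp.measure_preimage
    (MeasurableSet.univ_pi fun _ => measurableSet_Icc).nullMeasurableSet, volume_pi_pi]
  congr 1 with i
  rw [Real.volume_Icc]
  ring_nf

theorem setOf_abs_repr_sub_le_subset_tube {ι ι' : Type*} [Fintype ι] [Fintype ι'] {c : ℝ}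
    {z u : EuclideanSpace ℂ ι} (b : OrthonormalBasis (Fin 2 ⊕ ι') ℝ (EuclideanSpace ℂ ι))
    (hb₀ : b (.inl 0) = u) (hb₁ : b (.inl 1) = Complex.I • u) (hzu : z = (‖z‖ : ℂ) • u)
    (hz : ‖z‖ ≤ 1) (hc : 0 ≤ c) {r : Fin 2 ⊕ ι' → ℝ}
    (hr : ∑ i, r i ^ 2 ≤ 4 * c ^ 2 * (1 - ‖z‖ ^ 2))
    (hr₀ : r (.inl 0) ^ 2 + r (.inl 1) ^ 2 ≤ (c * (1 - ‖z‖ ^ 2)) ^ 2) :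
    {w | ∀ i, |b.repr (w - z) i| ≤ r i} ⊆ tube c z := by
  intro w hw
  set x := b.repr (w - z)
  have hsq : ∀ i, x i ^ 2 ≤ r i ^ 2 := fun i => sq_le_sq' (abs_le.mp (hw i)).1 (abs_le.mp (hw i)).2
  constructor
  · calc ‖w - z‖ ^ 2 = ∑ i, x i ^ 2 := by
          rw [← b.repr.norm_map, EuclideanSpace.norm_sq_eq]
          simp [x]
      _ ≤ ∑ i, r i ^ 2 := Finset.sum_le_sum fun i _ => hsq i
      _ ≤ _ := hr
  · have hre : (⟪u, w - z⟫).re = x (.inl 0) := by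
      rw [b.repr_apply_apply, hb₀, EuclideanSpace.real_inner_eq_re_inner]
    have him : (⟪u, w - z⟫).im = x (.inl 1) := by
      rw [b.repr_apply_apply, hb₁, EuclideanSpace.real_inner_eq_re_inner, inner_smul_left,
        Complex.conj_I, neg_mul, Complex.neg_re, Complex.I_mul_re, neg_neg]
    have hs : 0 ≤ 1 - ‖z‖ ^ 2 := by nlinarith [norm_nonneg z]
    have hu : ‖⟪u, w - z⟫‖ ≤ c * (1 - ‖z‖ ^ 2) := by
      refine le_of_sq_le_sq ?_ (by positivity)
      rw [Complex.sq_norm, Complex.normSq_apply, hre, him]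
      nlinarith [hsq (.inl 0), hsq (.inl 1)]
    calc ‖⟪z, w - z⟫‖ = ‖z‖ * ‖⟪u, w - z⟫‖ := by
          nth_rw 1 [hzu]
          rw [inner_smul_left, norm_mul, Complex.norm_conj, Complex.norm_real, norm_norm]
      _ ≤ 1 * (c * (1 - ‖z‖ ^ 2)) :=
          mul_le_mul hz hu (norm_nonneg _) zero_le_one
      _ = _ := one_mul _

theorem ofReal_le_volume_tube {n : ℕ} (hn : 1 ≤ n) {c : ℝ} (hc0 : 0 ≤ c)
    {z : EuclideanSpace ℂ (Fin n)} (hz : ‖z‖ < 1) :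
    ENNReal.ofReal ((c / n) ^ (2 * n) * (1 - ‖z‖ ^ 2) ^ (n + 1)) ≤ volume (tube c z) := by
  obtain ⟨m, rfl⟩ : ∃ m, n = m + 1 := ⟨n - 1, by omega⟩
  obtain ⟨u, hu, hzu⟩ := exists_norm_eq_one_and_eq_norm_smul z
  obtain ⟨b, hb₀, hb₁⟩ := EuclideanSpace.exists_orthonormalBasis_inl_eq hu
  set s := 1 - ‖z‖ ^ 2
  have hs : 0 < s := one_sub_norm_sq_pos hz
  have hs1 : s ≤ 1 := by nlinarith [norm_nonneg z]
  -- half-widths of a box in the adapted basis: `κ s` in the complex normal direction of `z`,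
  -- `κ √s` in the `2m` real tangential ones
  set κ := c / (2 * (m + 1))
  have hκ : 2 * (m + 1) * κ = c := by simp only [κ]; field_simp
  have hκ0 : 0 ≤ κ := by positivity
  have hκc : 2 * κ ≤ c := by nlinarith [(Nat.cast_nonneg m : (0 : ℝ) ≤ m)]
  have h2κ : 2 * κ = c / ↑(m + 1) := by rw [eq_div_iff (by positivity)]; push_cast; linarith
  set r : Fin 2 ⊕ Fin (2 * m) → ℝ := Sum.elim (fun _ => κ * s) (fun _ => κ * √s)
  have hr0 : ∀ i, 0 ≤ r i := by
    rintro (i | i) <;> simp only [r, Sum.elim_inl, Sum.elim_inr] <;> positivity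
  have hr : ∀ i, r i ^ 2 ≤ κ ^ 2 * s := by
    rintro (i | i)
    · simp only [r, Sum.elim_inl, mul_pow]
      exact mul_le_mul_of_nonneg_left (by nlinarith) (sq_nonneg κ)
    · simp only [r, Sum.elim_inr, mul_pow, Real.sq_sqrt hs.le, le_refl]
  have hbox : {w | ∀ i, |b.repr (w - z) i| ≤ r i} ⊆ tube c z := by
    refine setOf_abs_repr_sub_le_subset_tube b hb₀ hb₁ hzu hz.le hc0 ?_ ?_
    · calc ∑ i, r i ^ 2 ≤ ∑ _i : Fin 2 ⊕ Fin (2 * m), κ ^ 2 * s :=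
            Finset.sum_le_sum fun i _ => hr i
        _ = c * κ * s := by
          simp only [Finset.sum_const, Finset.card_univ, Fintype.card_sum, Fintype.card_fin,
            nsmul_eq_mul, ← hκ]
          push_cast
          ring
        _ ≤ 4 * c ^ 2 * s := by nlinarith [mul_le_mul_of_nonneg_right hκc (mul_nonneg hc0 hs.le)]
    · change (κ * s) ^ 2 + (κ * s) ^ 2 ≤ (c * s) ^ 2
      nlinarith [mul_self_le_mul_self (by positivity) hκc, sq_nonneg s]
  calc ENNReal.ofReal ((c / ↑(m + 1)) ^ (2 * (m + 1)) * s ^ (m + 1 + 1))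
      = ∏ i, ENNReal.ofReal (2 * r i) := by
        rw [← ENNReal.ofReal_prod_of_nonneg (fun i _ => by linarith [hr0 i]),
          Fintype.prod_sum_type]
        congr 1
        simp only [r, Sum.elim_inl, Sum.elim_inr, Finset.prod_const, Finset.card_univ,
          Fintype.card_fin, ← mul_assoc, h2κ, mul_pow, pow_mul √s, Real.sq_sqrt hs.le]
        ring
    _ = volume {w | ∀ i, |b.repr (w - z) i| ≤ r i} := (b.volume_setOf_abs_repr_sub_le z r).symm
    _ ≤ volume (tube c z) := measure_mono hbox

theorem summable_of_ofReal_le_measure {α ι : Type*} [MeasurableSpace α] [Countable ι]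
    {μ : Measure α} {s : ι → Set α} {f : ι → ℝ} (hs : ∀ i, NullMeasurableSet (s i) μ)
    (hd : Pairwise (Disjoint on s)) (hfin : μ (⋃ i, s i) ≠ ⊤) (hf0 : ∀ i, 0 ≤ f i)
    (hf : ∀ i, ENNReal.ofReal (f i) ≤ μ (s i)) : Summable f := by
  have htsum : ∑' i, ENNReal.ofReal (f i) ≠ ⊤ := by
    refine ne_top_of_le_ne_top ?_ (ENNReal.tsum_le_tsum hf)
    rwa [← measure_iUnion₀ (hd.mono fun _ _ h => h.aedisjoint) hs]
  simpa only [ENNReal.toReal_ofReal (hf0 _)] using ENNReal.summable_toReal htsum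

/-- **Corollary 3.3 (Abate–Saracco), in the ball.** If a sequence in the unit ball of `ℂⁿ`
is uniformly discrete with respect to the pseudohyperbolic distance, then
`Σ_j (1-‖z_j‖)^{n+1} < ∞`. -/
theorem stmt_15 (n : ℕ) (hn : 1 ≤ n) (z : ℕ → EuclideanSpace ℂ (Fin n))
    (hz : ∀ j, ‖z j‖ < 1) (δ : ℝ) (hδ : 0 < δ)
    (hsep : ∀ j k, j ≠ k → δ ≤ pdist (z j) (z k)) :
    Summable fun j => (1 - ‖z j‖) ^ (n + 1) := by
  set c := min (1 / 12) (δ ^ 2 / 96)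
  have hc0 : 0 < c := by positivity
  have hc : c ≤ 1 / 12 := min_le_left _ _
  have hdisj : Pairwise (Disjoint on fun j => tube c (z j)) := by
    refine fun j k hjk => Set.disjoint_left.mpr fun w hwj hwk => ?_
    have hρ := pdist_sq_le_of_mem_tube_inter (hz j) (hz k) hc hwj hwk
    nlinarith [hsep j k hjk, min_le_right (1 / 12 : ℝ) (δ ^ 2 / 96)]
  have hbdd : volume (⋃ j, tube c (z j)) ≠ ⊤ :=
    ne_top_of_le_ne_top measure_ball_lt_top.ne
      (measure_mono (Set.iUnion_subset fun j => tube_subset_ball (hz j) (by linarith)))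
  have hsum := summable_of_ofReal_le_measure
    (fun j => (isClosed_tube c (z j)).measurableSet.nullMeasurableSet) hdisj hbdd
    (fun j => by have := one_sub_norm_sq_pos (hz j); positivity)
    (fun j => ofReal_le_volume_tube hn hc0.le (hz j))
  refine .of_nonneg_of_le (fun j => pow_nonneg (by linarith [hz j]) _) (fun j => ?_)
    ((summable_mul_left_iff (by positivity)).mp hsum)
  exact pow_le_pow_left₀ (by linarith [hz j]) (by nlinarith [hz j, norm_nonneg (z j)]) _
end
end

section
/- Let Γ = {z_j} be a sequence in Bⁿ that is uniformly discrete with respect to the pseudohyperbolic distance and satisfies 0 < ‖z_j‖ < 1 for all j. Let h : (0,∞) → (0,∞) be an increasing function with Σ_{m=1}^∞ h(1/m) < ∞. Then Σ_j (1-‖z_j‖)^{2n} · h(-1/log(1-‖z_j‖)) < ∞. -/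
/-
A pseudohyperbolically δ-separated point `z` of the ball is Euclidean-separated at scale
`δ (1 - ‖z‖) / 2`, because `ρ(z,w) (1 - ‖z‖‖w‖) ≤ ‖z - w‖`. The Euclidean balls of these radii
are therefore pairwise disjoint and all lie in a fixed ball, so comparing Lebesgue measures in
real dimension `2n` gives `Σ (1 - ‖z_j‖)^{2n} < ∞`. In particular `‖z_j‖ → 1`, so eventually
`-1 / log (1 - ‖z_j‖) ≤ 1`, and monotonicity of `h` bounds the second factor by `h 1`.
-/

open scoped ComplexInnerProductSpace

noncomputable section

open Function Metric MeasureTheory Module Filter Set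

theorem summable_pow_finrank_of_pairwise_disjoint_ball {E ι : Type*} [NormedAddCommGroup E]
    [NormedSpace ℝ E] [FiniteDimensional ℝ E] [Nontrivial E] {x : ι → E} {r : ι → ℝ}
    (hr : ∀ i, 0 ≤ r i) (hdisj : Pairwise (Disjoint on fun i => ball (x i) (r i)))
    {R : ℝ} (hsub : ∀ i, ball (x i) (r i) ⊆ ball 0 R) :
    Summable fun i => r i ^ finrank ℝ E := by
  borelize E
  let μ : Measure E := Measure.addHaar
  have hpack : (∑' i, ENNReal.ofReal (r i ^ finrank ℝ E)) * μ (ball 0 1) ≤ μ (ball 0 R) :=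
    calc (∑' i, ENNReal.ofReal (r i ^ finrank ℝ E)) * μ (ball 0 1)
        = ∑' i, μ (ball (x i) (r i)) := by
          simp only [← ENNReal.tsum_mul_right, Measure.addHaar_ball μ _ (hr _)]
      _ ≤ μ (⋃ i, ball (x i) (r i)) :=
          tsum_meas_le_meas_iUnion_of_disjoint μ (fun _ => measurableSet_ball) hdisj
      _ ≤ μ (ball 0 R) := measure_mono (iUnion_subset hsub)
  have hfin : ∑' i, ENNReal.ofReal (r i ^ finrank ℝ E) ≠ ⊤ := by
    intro htop
    rw [htop, ENNReal.top_mul (measure_ball_pos μ 0 one_pos).ne', top_le_iff] at hpack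
    exact measure_ball_lt_top.ne hpack
  exact (ENNReal.summable_toReal hfin).congr fun i => ENNReal.toReal_ofReal (pow_nonneg (hr i) _)

theorem one_sub_norm_mul_norm_le_norm_one_sub_inner {E : Type*} [NormedAddCommGroup E]
    [InnerProductSpace ℂ E] (z w : E) : 1 - ‖z‖ * ‖w‖ ≤ ‖1 - ⟪z, w⟫‖ :=
  calc 1 - ‖z‖ * ‖w‖ ≤ ‖(1 : ℂ)‖ - ‖⟪z, w⟫‖ := by
        rw [norm_one]
        linarith [norm_inner_le_norm (𝕜 := ℂ) z w]
    _ ≤ ‖1 - ⟪z, w⟫‖ := norm_sub_norm_le _ _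

theorem norm_one_sub_inner_sq_sub_le {E : Type*} [NormedAddCommGroup E]
    [InnerProductSpace ℂ E] (z w : E) :
    ‖1 - ⟪z, w⟫‖ ^ 2 - (1 - ‖z‖ ^ 2) * (1 - ‖w‖ ^ 2) ≤ ‖z - w‖ ^ 2 := by
  have hcs : ‖⟪z, w⟫‖ ≤ ‖z‖ * ‖w‖ := norm_inner_le_norm z w
  have hexp : ‖1 - ⟪z, w⟫‖ ^ 2 = 1 - 2 * (⟪z, w⟫).re + ‖⟪z, w⟫‖ ^ 2 := by
    simp only [Complex.sq_norm, Complex.normSq_apply, Complex.sub_re, Complex.sub_im,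
      Complex.one_re, Complex.one_im]
    ring
  rw [hexp, norm_sub_sq (𝕜 := ℂ), RCLike.re_to_complex]
  nlinarith [norm_nonneg ⟪z, w⟫, norm_nonneg z, norm_nonneg w]

theorem pdist_mul_le_norm_sub {n : ℕ} {z w : EuclideanSpace ℂ (Fin n)} (hz : ‖z‖ < 1)
    (hw : ‖w‖ < 1) : pdist z w * (1 - ‖z‖ * ‖w‖) ≤ ‖z - w‖ := by
  have hzw : 0 < 1 - ‖z‖ * ‖w‖ := by nlinarith [norm_nonneg z, norm_nonneg w]
  have hden : 0 < ‖1 - ⟪z, w⟫‖ := hzw.trans_le (one_sub_norm_mul_norm_le_norm_one_sub_inner z w)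
  have hle : pdist z w ≤ ‖z - w‖ / ‖1 - ⟪z, w⟫‖ := by
    rw [pdist, ← Real.sqrt_sq (by positivity : 0 ≤ ‖z - w‖ / ‖1 - ⟪z, w⟫‖)]
    refine Real.sqrt_le_sqrt ?_
    rw [div_pow, one_sub_div (by positivity), div_le_div_iff_of_pos_right (by positivity)]
    exact norm_one_sub_inner_sq_sub_le z w
  calc pdist z w * (1 - ‖z‖ * ‖w‖) ≤ pdist z w * ‖1 - ⟪z, w⟫‖ :=
        mul_le_mul_of_nonneg_left (one_sub_norm_mul_norm_le_norm_one_sub_inner z w)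
          (Real.sqrt_nonneg _)
    _ ≤ ‖z - w‖ := (le_div_iff₀ hden).mp hle

theorem add_le_dist_of_le_pdist {n : ℕ} {z w : EuclideanSpace ℂ (Fin n)} (hz : ‖z‖ < 1)
    (hw : ‖w‖ < 1) {δ : ℝ} (hzw : δ ≤ pdist z w) :
    δ / 2 * (1 - ‖z‖) + δ / 2 * (1 - ‖w‖) ≤ dist z w := by
  have hmean : (1 - ‖z‖) / 2 + (1 - ‖w‖) / 2 ≤ 1 - ‖z‖ * ‖w‖ := by
    nlinarith [mul_nonneg (norm_nonneg z) (sub_nonneg.mpr hw.le),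
      mul_nonneg (norm_nonneg w) (sub_nonneg.mpr hz.le)]
  calc δ / 2 * (1 - ‖z‖) + δ / 2 * (1 - ‖w‖) = δ * ((1 - ‖z‖) / 2 + (1 - ‖w‖) / 2) := by ring
    _ ≤ pdist z w * (1 - ‖z‖ * ‖w‖) := mul_le_mul hzw hmean (by linarith) (Real.sqrt_nonneg _)
    _ ≤ dist z w := (pdist_mul_le_norm_sub hz hw).trans_eq (dist_eq_norm z w).symm

theorem finrank_real_euclideanSpace_complex (n : ℕ) :
    finrank ℝ (EuclideanSpace ℂ (Fin n)) = 2 * n := by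
  rw [← finrank_mul_finrank ℝ ℂ, Complex.finrank_real_complex, finrank_euclideanSpace_fin]

theorem summable_one_sub_norm_pow_of_le_pdist {ι : Type*} {n : ℕ} (hn : 0 < n)
    {z : ι → EuclideanSpace ℂ (Fin n)} (hz : ∀ j, ‖z j‖ < 1) {δ : ℝ} (hδ : 0 < δ)
    (hsep : Pairwise fun j k => δ ≤ pdist (z j) (z k)) :
    Summable fun j => (1 - ‖z j‖) ^ (2 * n) := by
  have : NeZero n := ⟨hn.ne'⟩
  have hr : ∀ j, 0 ≤ δ / 2 * (1 - ‖z j‖) := fun j =>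
    mul_nonneg (by positivity) (sub_nonneg.mpr (hz j).le)
  have hsub : ∀ j, ball (z j) (δ / 2 * (1 - ‖z j‖)) ⊆ ball 0 (1 + δ / 2) := fun j =>
    ball_subset_ball' <| by
      rw [dist_zero_right]
      nlinarith [hz j, norm_nonneg (z j)]
  have hballs := summable_pow_finrank_of_pairwise_disjoint_ball hr
    (fun j k hjk => ball_disjoint_ball (add_le_dist_of_le_pdist (hz j) (hz k) (hsep hjk)))
    hsub
  simp only [finrank_real_euclideanSpace_complex, mul_pow] at hballs
  exact (summable_mul_left_iff (by positivity)).mp hballs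

theorem neg_one_div_log_le_one {t : ℝ} (ht : 0 < t) (hte : t ≤ Real.exp (-1)) :
    -1 / Real.log t ≤ 1 := by
  have hlog : Real.log t ≤ -1 := by simpa using Real.log_le_log ht hte
  exact (div_le_one_of_neg (by linarith)).mpr hlog

theorem stmt_16_general (n : ℕ) (hn : 1 ≤ n) (z : ℕ → EuclideanSpace ℂ (Fin n))
    (hz0 : ∀ j, 0 < ‖z j‖) (hz1 : ∀ j, ‖z j‖ < 1) (δ : ℝ) (hδ : 0 < δ)
    (hsep : ∀ j k, j ≠ k → δ ≤ pdist (z j) (z k))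
    (h : ℝ → ℝ) (hpos : ∀ x, 0 < x → 0 < h x)
    (hmono : ∀ x y, 0 < x → x ≤ y → h x ≤ h y) :
    Summable fun j => (1 - ‖z j‖) ^ (2 * n) * h (-1 / Real.log (1 - ‖z j‖)) := by
  have hpack := summable_one_sub_norm_pow_of_le_pdist hn hz1 hδ hsep
  have hnear : ∀ᶠ j in cofinite, 1 - ‖z j‖ ≤ Real.exp (-1) := by
    filter_upwards [hpack.tendsto_cofinite_zero.eventually
      (gt_mem_nhds (pow_pos (Real.exp_pos (-1)) (2 * n)))] with j hj
    exact (pow_lt_pow_iff_left₀ (by linarith [hz1 j]) (Real.exp_pos _).le (by omega)).mp hj |>.le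
  refine (hpack.mul_right (h 1)).of_norm_bounded_eventually ?_
  filter_upwards [hnear] with j hj
  have hd : 0 < 1 - ‖z j‖ := by linarith [hz1 j]
  have harg : 0 < -1 / Real.log (1 - ‖z j‖) :=
    div_pos_of_neg_of_neg neg_one_lt_zero (Real.log_neg hd (by linarith [hz0 j]))
  rw [Real.norm_of_nonneg (mul_nonneg (pow_nonneg hd.le _) (hpos _ harg).le)]
  exact mul_le_mul_of_nonneg_left (hmono _ _ harg (neg_one_div_log_le_one hd hj))
    (pow_nonneg hd.le _)

/-- **Proposition 3.4 (Abate–Saracco), in the ball.** If a sequence in the unit ball of `ℂⁿ`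
is uniformly discrete with respect to the pseudohyperbolic distance and `0 < ‖z_j‖ < 1` for
all `j`, and if `h : (0,∞) → (0,∞)` is increasing with `Σ_{m≥1} h(1/m) < ∞`, then
`Σ_j (1-‖z_j‖)^{2n}·h(-1/log(1-‖z_j‖)) < ∞`. -/
theorem stmt_16 (n : ℕ) (hn : 1 ≤ n) (z : ℕ → EuclideanSpace ℂ (Fin n))
    (hz0 : ∀ j, 0 < ‖z j‖) (hz1 : ∀ j, ‖z j‖ < 1) (δ : ℝ) (hδ : 0 < δ)
    (hsep : ∀ j k, j ≠ k → δ ≤ pdist (z j) (z k))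
    (h : ℝ → ℝ) (hpos : ∀ x, 0 < x → 0 < h x)
    (hmono : ∀ x y, 0 < x → x ≤ y → h x ≤ h y)
    (hsum : Summable fun m : ℕ => h (1 / (m + 1))) :
    Summable fun j => (1 - ‖z j‖) ^ (2 * n) * h (-1 / Real.log (1 - ‖z j‖)) :=
  stmt_16_general n hn z hz0 hz1 δ hδ hsep h hpos hmono
end
end
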